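/- With A_j = ∂P_j as above, for every i and r ≥ 1 one has A_i ∩ A_{i+1} ∩ ... ∩ A_{i+r−1} = A_i ∩ A_{i+r−1}; explicitly, this common set equals {Q : i^-(Q) ≤ i and Q is a limit of symmetric matrices Q_n with i^-(Q_n) ≥ i+r}. -/

import Mathlib

open Matrix Filter

/-- The negative inertia index of a real matrix. -/
noncomputable def negIndex {n : ℕ} (Q : Matrix (Fin n) (Fin n) ℝ) : ℕ :=
  sSup {d : ℕ | ∃ W : Submodule ℝ (Fin n → ℝ), Module.finrank ℝ W = d ∧
    ∀ x ∈ W, x ≠ 0 → x ⬝ᵥ Q.mulVec x < 0}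

/-- The space of real symmetric `n×n` matrices with its natural topology. -/
abbrev SymMat (n : ℕ) : Type := {Q : Matrix (Fin n) (Fin n) ℝ // Q.IsSymm}

/-- `A_j` is the topological boundary in `Sym_n(ℝ)` of `P_j = {Q : i⁻(Q) ≤ j}`. -/
noncomputable def Aj (n j : ℕ) : Set (SymMat n) :=
  frontier {Q : SymMat n | negIndex Q.1 ≤ j}

/-- `Q` satisfies property `s(l)` if it is a limit of symmetric matrices with `i⁻ ≥ l`. -/
def propS {n : ℕ} (Q : SymMat n) (l : ℕ) : Prop :=
  ∃ Qs : ℕ → SymMat n, Tendsto Qs atTop (nhds Q) ∧ ∀ m, l ≤ negIndex (Qs m).1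

open Topology

/-!
`i⁻` is lower semicontinuous: a subspace on which `Q` is negative definite stays so for all
nearby `Q'`, by compactness of its unit sphere. Hence `P_j` is closed, its boundary `A_j` is
`P_j ∩ s(j+1)`, and since `P_j` grows and `s(j+1)` shrinks with `j`, the intersection of
`A_i, …, A_k` is `P_i ∩ s(k+1)`.
-/

instance Matrix.firstCountableTopology {m n R : Type*} [Countable m] [Countable n]
    [TopologicalSpace R] [FirstCountableTopology R] :
    FirstCountableTopology (Matrix m n R) :=
  inferInstanceAs (FirstCountableTopology (m → n → R))

namespace Matrix

variable {ι : Type*} [Fintype ι]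

def NegDefOn (Q : Matrix ι ι ℝ) (W : Submodule ℝ (ι → ℝ)) : Prop :=
  ∀ x ∈ W, x ≠ 0 → x ⬝ᵥ Q *ᵥ x < 0

lemma continuous_quadForm :
    Continuous fun p : Matrix ι ι ℝ × (ι → ℝ) => p.2 ⬝ᵥ p.1 *ᵥ p.2 :=
  continuous_snd.dotProduct (continuous_fst.matrix_mulVec continuous_snd)

lemma NegDefOn.eventually {Q : Matrix ι ι ℝ} {W : Submodule ℝ (ι → ℝ)} (hQ : Q.NegDefOn W) :
    ∀ᶠ Q' in 𝓝 Q, Q'.NegDefOn W := by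
  set K : Set (ι → ℝ) := Metric.sphere 0 1 ∩ W
  have hK : IsCompact K :=
    (isCompact_sphere 0 1).inter_right (Submodule.closed_of_finiteDimensional W)
  have hneg : ∀ᶠ Q' in 𝓝 Q, ∀ u ∈ K, u ⬝ᵥ Q' *ᵥ u < 0 := by
    refine hK.eventually_forall_of_forall_eventually fun u hu => ?_
    have hu0 : u ≠ 0 := ne_zero_of_mem_unit_sphere ⟨u, hu.1⟩
    exact continuous_quadForm.continuousAt.eventually
      (gt_mem_nhds (show u ⬝ᵥ Q *ᵥ u < 0 from hQ u hu.2 hu0))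
  filter_upwards [hneg] with Q' hQ' x hxW hx0
  have hnorm : 0 < ‖x‖ := norm_pos_iff.mpr hx0
  have hu : ‖x‖⁻¹ • x ∈ K :=
    ⟨by simp [norm_smul, hnorm.ne'], W.smul_mem _ hxW⟩
  have hscale : x ⬝ᵥ Q' *ᵥ x = ‖x‖ ^ 2 * ((‖x‖⁻¹ • x) ⬝ᵥ Q' *ᵥ (‖x‖⁻¹ • x)) := by
    simp only [mulVec_smul, dotProduct_smul, smul_dotProduct, smul_eq_mul]
    field_simp
  rw [hscale]
  exact mul_neg_of_pos_of_neg (by positivity) (hQ' _ hu)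

end Matrix

section NegIndex

variable {n : ℕ}

lemma bddAbove_finrank_negDefOn (Q : Matrix (Fin n) (Fin n) ℝ) :
    BddAbove {d | ∃ W : Submodule ℝ (Fin n → ℝ), Module.finrank ℝ W = d ∧ Q.NegDefOn W} :=
  ⟨n, by rintro _ ⟨W, rfl, -⟩; simpa using W.finrank_le⟩

lemma le_negIndex {Q : Matrix (Fin n) (Fin n) ℝ} {W : Submodule ℝ (Fin n → ℝ)}
    (hW : Q.NegDefOn W) : Module.finrank ℝ W ≤ negIndex Q :=
  le_csSup (bddAbove_finrank_negDefOn Q) ⟨W, rfl, hW⟩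

lemma exists_negDefOn_finrank_eq_negIndex (Q : Matrix (Fin n) (Fin n) ℝ) :
    ∃ W : Submodule ℝ (Fin n → ℝ), Module.finrank ℝ W = negIndex Q ∧ Q.NegDefOn W := by
  refine Nat.sSup_mem ?_ (bddAbove_finrank_negDefOn Q)
  exact ⟨0, ⊥, finrank_bot ℝ _, fun x hx hx0 => (hx0 ((Submodule.mem_bot ℝ).mp hx)).elim⟩

lemma isOpen_setOf_lt_negIndex (j : ℕ) :
    IsOpen {Q : Matrix (Fin n) (Fin n) ℝ | j < negIndex Q} := by
  refine isOpen_iff_mem_nhds.mpr fun Q hQ => ?_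
  obtain ⟨W, hWrank, hW⟩ := exists_negDefOn_finrank_eq_negIndex Q
  filter_upwards [hW.eventually] with Q' hQ'
  exact hQ.trans_le (hWrank ▸ le_negIndex hQ')

lemma isClosed_setOf_negIndex_le (j : ℕ) : IsClosed {Q : SymMat n | negIndex Q.1 ≤ j} := by
  convert ((isOpen_setOf_lt_negIndex j).preimage continuous_subtype_val).isClosed_compl using 1
  ext
  simp

lemma propS_iff_mem_closure {Q : SymMat n} {l : ℕ} :
    propS Q l ↔ Q ∈ closure {Q : SymMat n | l ≤ negIndex Q.1} := by
  rw [mem_closure_iff_seq_limit, propS]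
  exact ⟨fun ⟨Qs, hlim, hge⟩ => ⟨Qs, hge, hlim⟩, fun ⟨Qs, hge, hlim⟩ => ⟨Qs, hlim, hge⟩⟩

lemma propS.mono {Q : SymMat n} {k l : ℕ} (h : propS Q l) (hkl : k ≤ l) : propS Q k :=
  let ⟨Qs, hlim, hge⟩ := h
  ⟨Qs, hlim, fun m => hkl.trans (hge m)⟩

lemma Aj_eq (n j : ℕ) : Aj n j = {Q : SymMat n | negIndex Q.1 ≤ j ∧ propS Q (j + 1)} := by
  ext Q
  have hcompl : {Q : SymMat n | negIndex Q.1 ≤ j}ᶜ = {Q | j + 1 ≤ negIndex Q.1} := by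
    ext; simp
  rw [Aj, frontier_eq_closure_inter_closure, (isClosed_setOf_negIndex_le j).closure_eq, hcompl,
    Set.mem_inter_iff, ← propS_iff_mem_closure]
  rfl

lemma biInter_Aj_Icc {i k : ℕ} (hik : i ≤ k) :
    (⋂ j ∈ Finset.Icc i k, Aj n j) = {Q : SymMat n | negIndex Q.1 ≤ i ∧ propS Q (k + 1)} := by
  ext Q
  simp only [Set.mem_iInter, Finset.mem_Icc, Aj_eq, Set.mem_ofPred_eq]
  refine ⟨fun h => ⟨(h i ⟨le_rfl, hik⟩).1, (h k ⟨hik, le_rfl⟩).2⟩, ?_⟩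
  rintro ⟨hi, hk⟩ j ⟨hij, hjk⟩
  exact ⟨hi.trans hij, hk.mono (by omega)⟩

lemma Aj_inter_Aj {i k : ℕ} (hik : i ≤ k) :
    Aj n i ∩ Aj n k = {Q : SymMat n | negIndex Q.1 ≤ i ∧ propS Q (k + 1)} := by
  ext Q
  simp only [Set.mem_inter_iff, Aj_eq, Set.mem_ofPred_eq]
  refine ⟨fun h => ⟨h.1.1, h.2.2⟩, fun ⟨hi, hk⟩ => ⟨⟨hi, hk.mono (by omega)⟩, ⟨by omega, hk⟩⟩⟩

end NegIndex

/-- For every `i` and `r ≥ 1`, `A_i ∩ A_{i+1} ∩ ⋯ ∩ A_{i+r−1} = A_i ∩ A_{i+r−1}`, and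
this common set equals `{Q : i⁻(Q) ≤ i and Q is a limit of symmetric matrices with i⁻ ≥ i+r}`. -/
theorem inter_consecutive_Aj (n i r : ℕ) (hr : 1 ≤ r) :
    (⋂ j ∈ Finset.Icc i (i + r - 1), Aj n j) = Aj n i ∩ Aj n (i + r - 1) ∧
    (⋂ j ∈ Finset.Icc i (i + r - 1), Aj n j) =
      {Q : SymMat n | negIndex Q.1 ≤ i ∧ propS Q (i + r)} := by
  have hik : i ≤ i + r - 1 := by omega
  have hk : i + r - 1 + 1 = i + r := by omega
  rw [biInter_Aj_Icc hik, Aj_inter_Aj hik, hk]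
  exact ⟨rfl, rfl⟩
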